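/- The Z-submodules of Z^3 spanned by (1,1,0), (1,0,1), and (0,1,1) are pairwise compatible (each pair admits a common basis of Z^3), but the three together do not have the common basis property; indeed their sum has index 2 in Z^3. -/

import Mathlib

/-!
Each pair of the three vectors extends by `(0,0,1)` to a unimodular matrix, hence to a basis.
All three vectors have even coordinate sum, and conversely every vector with even coordinate sum
is an integer combination of them, so their sum is the kernel of the coordinate sum modulo 2 and
has index 2. A common basis is impossible: the sum of submodules spanned by subsets of a basis is
again spanned by a subset of that basis, and the quotient by such a span is trivial or contains a
copy of `ℤ`, never of order 2.
-/

/-- A collection of submodules of `ℤ³` has the common basis property if there is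
a `ℤ`-basis `b` of `ℤ³` such that each member is the span of a subset of `b`. -/
def HasCommonBasis (σ : Set (Submodule ℤ (Fin 3 → ℤ))) : Prop :=
  ∃ b : Module.Basis (Fin 3) ℤ (Fin 3 → ℤ),
    ∀ U ∈ σ, ∃ s : Set (Fin 3), U = Submodule.span ℤ (b '' s)

open Submodule

theorem hasCommonBasis_pair_of_isUnit_det (u v w : Fin 3 → ℤ)
    (h : IsUnit (Matrix.of ![u, v, w]).det) :
    HasCommonBasis {span ℤ {u}, span ℤ {v}} := by
  obtain ⟨hli, hspan⟩ :=
    (Pi.basisFun ℤ (Fin 3)).is_basis_iff_det.mpr (by rwa [Pi.basisFun_det_apply])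
  refine ⟨.mk hli hspan.ge, ?_⟩
  rintro U (rfl | rfl)
  · exact ⟨{0}, by simp⟩
  · exact ⟨{1}, by simp⟩

theorem natCard_quotient_span_basis_image_le_one {ι R M : Type*} [Ring R] [Infinite R]
    [AddCommGroup M] [Module R M] (b : Module.Basis ι R M) (s : Set ι) :
    Nat.card (M ⧸ span R (b '' s)) ≤ 1 := by
  by_cases hs : s = Set.univ
  · rw [hs, Set.image_univ, b.span_eq, Nat.card_unique]
  obtain ⟨i, hi⟩ := (Set.ne_univ_iff_exists_notMem s).mp hs
  have hle : span R (b '' s) ≤ LinearMap.ker (b.coord i) := by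
    rw [span_le]
    rintro _ ⟨j, hj, rfl⟩
    simp [show j ≠ i from fun h => hi (h ▸ hj)]
  have hsurj : Function.Surjective ((span R (b '' s)).liftQ (b.coord i) hle) := fun r =>
    ⟨Submodule.Quotient.mk (r • b i), by simp⟩
  have : Infinite (M ⧸ span R (b '' s)) := Infinite.of_surjective _ hsurj
  simp [Nat.card_eq_zero_of_infinite]

theorem HasCommonBasis.natCard_quotient_sup_le_one {U V W : Submodule ℤ (Fin 3 → ℤ)}
    (h : HasCommonBasis {U, V, W}) : Nat.card ((Fin 3 → ℤ) ⧸ (U ⊔ V ⊔ W)) ≤ 1 := by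
  obtain ⟨b, hb⟩ := h
  obtain ⟨s, rfl⟩ := hb U (by simp)
  obtain ⟨t, rfl⟩ := hb V (by simp)
  obtain ⟨r, rfl⟩ := hb W (by simp)
  rw [← span_union, ← span_union, ← Set.image_union, ← Set.image_union]
  exact natCard_quotient_span_basis_image_le_one b _

def coordSumMod2 : (Fin 3 → ℤ) →ₗ[ℤ] ZMod 2 where
  toFun x := ((x 0 + x 1 + x 2 : ℤ) : ZMod 2)
  map_add' x y := by simp only [Pi.add_apply]; push_cast; ring
  map_smul' c x := by simp only [Pi.smul_apply, smul_eq_mul, eq_intCast]; push_cast; ring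

theorem coordSumMod2_surjective : Function.Surjective coordSumMod2 := by
  intro y
  fin_cases y
  · exact ⟨0, rfl⟩
  · exact ⟨![1, 0, 0], rfl⟩

theorem sup_span_eq_ker_coordSumMod2 :
    span ℤ {(![1, 1, 0] : Fin 3 → ℤ)} ⊔ span ℤ {(![1, 0, 1] : Fin 3 → ℤ)} ⊔
        span ℤ {(![0, 1, 1] : Fin 3 → ℤ)} = LinearMap.ker coordSumMod2 := by
  apply le_antisymm
  · refine sup_le (sup_le ?_ ?_) ?_ <;>
      exact (span_singleton_le_iff_mem _ _).mpr (LinearMap.mem_ker.mpr rfl)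
  intro x hx
  obtain ⟨k, hk⟩ : (2 : ℤ) ∣ x 0 + x 1 + x 2 :=
    (ZMod.intCast_zmod_eq_zero_iff_dvd _ 2).mp hx
  have hx : x = (k - x 2) • ![1, 1, 0] + (k - x 1) • ![1, 0, 1] + (k - x 0) • ![0, 1, 1] := by
    funext j
    fin_cases j <;> simp <;> omega
  rw [hx]
  exact add_mem (add_mem
    (mem_sup_left (mem_sup_left (smul_mem _ _ (mem_span_singleton_self _))))
    (mem_sup_left (mem_sup_right (smul_mem _ _ (mem_span_singleton_self _)))))
    (mem_sup_right (smul_mem _ _ (mem_span_singleton_self _)))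

theorem natCard_quotient_sup_span_eq_two :
    Nat.card ((Fin 3 → ℤ) ⧸ (span ℤ {(![1, 1, 0] : Fin 3 → ℤ)} ⊔
      span ℤ {(![1, 0, 1] : Fin 3 → ℤ)} ⊔ span ℤ {(![0, 1, 1] : Fin 3 → ℤ)})) = 2 :=
  (Nat.card_congr ((quotEquivOfEq _ _ sup_span_eq_ker_coordSumMod2).trans
    (coordSumMod2.quotKerEquivOfSurjective coordSumMod2_surjective)).toEquiv).trans
    (Nat.card_zmod 2)

/-- The `ℤ`-submodules of `ℤ³` spanned by `(1,1,0)`, `(1,0,1)` and `(0,1,1)` are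
pairwise compatible, but the three together do not have the common basis
property; indeed their sum has index 2 in `ℤ³`. -/
theorem stmt10 :
    HasCommonBasis {Submodule.span ℤ {(![1, 1, 0] : Fin 3 → ℤ)},
        Submodule.span ℤ {(![1, 0, 1] : Fin 3 → ℤ)}} ∧
    HasCommonBasis {Submodule.span ℤ {(![1, 1, 0] : Fin 3 → ℤ)},
        Submodule.span ℤ {(![0, 1, 1] : Fin 3 → ℤ)}} ∧
    HasCommonBasis {Submodule.span ℤ {(![1, 0, 1] : Fin 3 → ℤ)},
        Submodule.span ℤ {(![0, 1, 1] : Fin 3 → ℤ)}} ∧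
    ¬ HasCommonBasis {Submodule.span ℤ {(![1, 1, 0] : Fin 3 → ℤ)},
        Submodule.span ℤ {(![1, 0, 1] : Fin 3 → ℤ)},
        Submodule.span ℤ {(![0, 1, 1] : Fin 3 → ℤ)}} ∧
    Nat.card ((Fin 3 → ℤ) ⧸ (Submodule.span ℤ {(![1, 1, 0] : Fin 3 → ℤ)} ⊔
        Submodule.span ℤ {(![1, 0, 1] : Fin 3 → ℤ)} ⊔
        Submodule.span ℤ {(![0, 1, 1] : Fin 3 → ℤ)})) = 2 := by
  refine ⟨hasCommonBasis_pair_of_isUnit_det _ _ ![0, 0, 1] (by decide),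
    hasCommonBasis_pair_of_isUnit_det _ _ ![0, 0, 1] (by decide),
    hasCommonBasis_pair_of_isUnit_det _ _ ![0, 0, 1] (by decide),
    fun h => ?_, natCard_quotient_sup_span_eq_two⟩
  have := h.natCard_quotient_sup_le_one
  rw [natCard_quotient_sup_span_eq_two] at this
  omega
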